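/- arXiv:1704.00424 — 3 statements merged into one kernel-verified Lean document; each statement's English description precedes it below -/
import Mathlib

section
/- Let n ≥ 2 be even. Then the convex hull of G_{[−1,1]^n} equals the polytope { (x,w) ∈ [−1,1]^n × [−1,1] : Σ_{i∈I} x_i − Σ_{i∉I} x_i + w ≤ n−1 for every subset I ⊆ {1,…,n} of odd cardinality, and Σ_{i∈I} x_i − Σ_{i∉I} x_i + w ≥ −(n−1) for every subset I ⊆ {1,…,n} of even cardinality }. -/
/-!
Both sides are cut out by the inequalities `σ ⬝ x - (∏ σ) w ≤ n - 1`, one for each sign vector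
`σ ∈ {±1}ⁿ`; for even `n` the sign vector that is `1` on `I` and `-1` off `I` has product
`(-1) ^ |I|`, which turns these into the odd and even families of the statement. The graph
satisfies them because `∑ yᵢ - ∏ yᵢ ≤ n - 1` on the cube. Conversely, a point of the polytope
lies in the hull of the vertices `(σ, ∏ σ)` once every linear functional `c ⬝ x + γ w` is at
least as large at some vertex as at the point. Take `σ = sign c`: if `γ ∏ σ ≥ 0` this vertex
will do; otherwise lower every `|cᵢ|` and `|γ|` by `t = min (|γ|, minᵢ |cᵢ|)`, pay for the
removed parts with the facet inequality of `σ`, and compare with `σ`, or with `σ` flipped at a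
minimiser of `|cᵢ|`.
-/

open Finset

lemma mul_le_abs_of_abs_le_one {a b : ℝ} (hb : |b| ≤ 1) : a * b ≤ |a| :=
  (le_abs_self _).trans (by rw [abs_mul]; exact mul_le_of_le_one_right (abs_nonneg a) hb)

lemma abs_prod_le_one {κ : Type*} {s : Finset κ} {y : κ → ℝ} (hy : ∀ i ∈ s, |y i| ≤ 1) :
    |∏ i ∈ s, y i| ≤ 1 := by
  rw [abs_prod]; exact prod_le_one (fun i _ => abs_nonneg _) hy

lemma sum_sub_prod_le_card_sub_one {κ : Type*} [DecidableEq κ] (s : Finset κ) {y : κ → ℝ}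
    (hy : ∀ i ∈ s, |y i| ≤ 1) : ∑ i ∈ s, y i - ∏ i ∈ s, y i ≤ #s - 1 := by
  induction s using Finset.induction_on with
  | empty => simp
  | insert a s ha ih =>
    have hs : ∀ i ∈ s, |y i| ≤ 1 := fun i hi => hy i (mem_insert_of_mem hi)
    obtain ⟨-, hya⟩ := abs_le.1 (hy a (mem_insert_self a s))
    obtain ⟨-, hP⟩ := abs_le.1 (abs_prod_le_one hs)
    rw [sum_insert ha, prod_insert ha, card_insert_of_notMem ha, Nat.cast_succ]
    -- with `P = ∏ i ∈ s, y i`: `y a - y a * P ≤ 1 - P` as `(1 - y a) * (1 - P) ≥ 0`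
    nlinarith [ih hs, mul_nonneg (sub_nonneg.2 hya) (sub_nonneg.2 hP)]

lemma mem_Icc_neg_one_one_iff {ι : Type*} {x : ι → ℝ} :
    x ∈ Set.Icc (-1 : ι → ℝ) 1 ↔ ∀ i, |x i| ≤ 1 := by
  simp [Pi.le_def, abs_le, forall_and]

lemma LinearMap.exists_apply_eq_sum_mul_add_mul {ι : Type*} [Fintype ι] [DecidableEq ι]
    (l : (ι → ℝ) × ℝ →ₗ[ℝ] ℝ) :
    ∃ (c : ι → ℝ) (γ : ℝ), ∀ p, l p = ∑ i, c i * p.1 i + γ * p.2 := by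
  refine ⟨fun i => l (fun j => if i = j then 1 else 0, 0), l (0, 1), fun p => ?_⟩
  calc l p = (l ∘ₗ LinearMap.inl ℝ _ _) p.1 + p.2 • l (0, 1) := by
          rw [← map_smul, LinearMap.comp_apply, ← map_add]; simp
    _ = _ := by rw [LinearMap.pi_apply_eq_sum_univ]; simp [mul_comm]

section SignVectors

variable {ι : Type*} [DecidableEq ι]

def signVec (I : Finset ι) (i : ι) : ℝ := if i ∈ I then 1 else -1

lemma abs_signVec (I : Finset ι) (i : ι) : |signVec I i| = 1 := by
  unfold signVec; split_ifs <;> simp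

lemma signVec_mul_self (I : Finset ι) (i : ι) : signVec I i * signVec I i = 1 := by
  rw [← abs_mul_abs_self, abs_signVec, one_mul]

lemma signVec_symmDiff_singleton_self (I : Finset ι) (k : ι) :
    signVec (symmDiff I {k}) k = -signVec I k := by
  by_cases hk : k ∈ I <;> simp [signVec, mem_symmDiff, hk]

lemma signVec_symmDiff_singleton_of_ne (I : Finset ι) {i k : ι} (hik : i ≠ k) :
    signVec (symmDiff I {k}) i = signVec I i := by
  simp [signVec, mem_symmDiff, hik]

variable [Fintype ι]

lemma abs_prod_signVec (I : Finset ι) : |∏ i, signVec I i| = 1 := by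
  rw [abs_prod]; exact prod_eq_one fun i _ => abs_signVec I i

lemma sum_signVec_mul (I : Finset ι) (x : ι → ℝ) :
    ∑ i, signVec I i * x i = ∑ i ∈ I, x i - ∑ i ∈ Iᶜ, x i := by
  rw [← sum_add_sum_compl I, sub_eq_add_neg, ← sum_neg_distrib]
  congr 1 <;> refine sum_congr rfl fun i hi => ?_
  · simp [signVec, hi]
  · simp [signVec, mem_compl.1 hi]

lemma prod_signVec (I : Finset ι) : ∏ i, signVec I i = (-1) ^ #Iᶜ := by
  rw [← prod_mul_prod_compl I, prod_eq_one fun i hi => by simp [signVec, hi], one_mul,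
    ← prod_const]
  exact prod_congr rfl fun i hi => by simp [signVec, mem_compl.1 hi]

lemma even_card_compl_iff (h : Even (Fintype.card ι)) (I : Finset ι) :
    Even #Iᶜ ↔ Even #I := by
  rw [card_compl, Nat.even_sub (card_le_univ I)]; simp [h]

lemma prod_signVec_of_even (h : Even (Fintype.card ι)) (I : Finset ι) :
    ∏ i, signVec I i = (-1) ^ #I := by
  rw [prod_signVec]; exact neg_one_pow_congr (even_card_compl_iff h I)

lemma sum_mul_signVec_symmDiff_singleton (c : ι → ℝ) (I : Finset ι) (k : ι) :
    ∑ i, c i * signVec (symmDiff I {k}) i = ∑ i, c i * signVec I i - 2 * (c k * signVec I k) := by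
  rw [Fintype.sum_eq_add_sum_compl k, Fintype.sum_eq_add_sum_compl k (fun i => c i * signVec I i),
    signVec_symmDiff_singleton_self,
    sum_congr rfl fun i hi => by rw [signVec_symmDiff_singleton_of_ne I (by simpa using hi)]]
  ring

lemma prod_signVec_symmDiff_singleton (I : Finset ι) (k : ι) :
    ∏ i, signVec (symmDiff I {k}) i = -∏ i, signVec I i := by
  rw [Fintype.prod_eq_mul_prod_compl k, Fintype.prod_eq_mul_prod_compl k (signVec I),
    signVec_symmDiff_singleton_self,
    prod_congr rfl fun i hi => by rw [signVec_symmDiff_singleton_of_ne I (by simpa using hi)]]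
  ring

end SignVectors

section Polytope

variable {ι : Type*} [Fintype ι] [DecidableEq ι]

variable (ι) in
def monomialPolytope : Set ((ι → ℝ) × ℝ) :=
  {p | p.1 ∈ Set.Icc (-1) 1 ∧ p.2 ∈ Set.Icc (-1) 1 ∧
    ∀ I : Finset ι, ∑ i, signVec I i * p.1 i - (∏ i, signVec I i) * p.2 ≤ Fintype.card ι - 1}

lemma convex_monomialPolytope : Convex ℝ (monomialPolytope ι) := by
  have hlin (I : Finset ι) : IsLinearMap ℝ fun p : (ι → ℝ) × ℝ =>
      ∑ i, signVec I i * p.1 i - (∏ i, signVec I i) * p.2 :=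
    ⟨fun p q => by
      simp only [Prod.fst_add, Prod.snd_add, Pi.add_apply, mul_add, sum_add_distrib]; ring,
     fun a p => by
      simp only [Prod.smul_fst, Prod.smul_snd, Pi.smul_apply, smul_eq_mul, mul_sub, mul_sum]
      congr 1
      · exact sum_congr rfl fun i _ => mul_left_comm _ _ _
      · exact mul_left_comm _ _ _⟩
  simp only [monomialPolytope, Set.ofPred_and, Set.ofPred_forall]
  exact ((convex_Icc _ _).linear_preimage (LinearMap.fst ℝ _ _)).inter
    (((convex_Icc _ _).linear_preimage (LinearMap.snd ℝ _ _)).inter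
      (convex_iInter fun I => convex_halfSpace_le (hlin I) _))

lemma graph_subset_monomialPolytope :
    {p : (ι → ℝ) × ℝ | p.1 ∈ Set.Icc (-1) 1 ∧ p.2 = ∏ j, p.1 j} ⊆ monomialPolytope ι := by
  rintro ⟨x, w⟩ ⟨hx, hw⟩
  dsimp only at hx hw
  subst hw
  rw [mem_Icc_neg_one_one_iff] at hx
  refine ⟨mem_Icc_neg_one_one_iff.2 hx, abs_le.1 (abs_prod_le_one fun i _ => hx i), fun I => ?_⟩
  have hy (i : ι) (_ : i ∈ univ) : |signVec I i * x i| ≤ 1 := by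
    rw [abs_mul, abs_signVec, one_mul]; exact hx i
  simpa [prod_mul_distrib] using sum_sub_prod_le_card_sub_one univ hy

lemma sum_mul_add_mul_le_of_facet {c x : ι → ℝ} {γ w t : ℝ} {I : Finset ι}
    (hx : ∀ i, |x i| ≤ 1) (hw : |w| ≤ 1) (hcI : ∀ i, c i * signVec I i = |c i|)
    (hγ : γ * ∏ i, signVec I i = -|γ|) (ht₀ : 0 ≤ t) (htγ : t ≤ |γ|) (htc : ∀ i, t ≤ |c i|)
    (hfacet : ∑ i, signVec I i * x i - (∏ i, signVec I i) * w ≤ Fintype.card ι - 1) :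
    ∑ i, c i * x i + γ * w ≤ ∑ i, |c i| + |γ| - 2 * t := by
  set s := signVec I
  set σ := ∏ i, s i
  have hσ : σ * σ = 1 := by rw [← abs_mul_abs_self, abs_prod_signVec, one_mul]
  have hsx (i : ι) : s i * x i ≤ 1 := abs_signVec I i ▸ mul_le_abs_of_abs_le_one (hx i)
  have hσw : -(σ * w) ≤ 1 := by
    rw [← neg_mul, ← abs_prod_signVec I, ← abs_neg]; exact mul_le_abs_of_abs_le_one hw
  -- split off `t` from every `|c i|` and `-|γ| σ`, then charge those parts to the facet of `I`
  have hsplit : ∑ i, c i * x i + γ * w =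
      ∑ i, (|c i| - t) * (s i * x i) + t * (∑ i, s i * x i - σ * w) + (|γ| - t) * -(σ * w) := by
    have hsum : ∑ i, c i * x i = ∑ i, (|c i| - t) * (s i * x i) + t * ∑ i, s i * x i := by
      rw [mul_sum, ← sum_add_distrib]
      exact sum_congr rfl fun i _ => by
        rw [← hcI i]; linear_combination (-(c i * x i)) * signVec_mul_self I i
    linear_combination hsum + (σ * w) * hγ - (γ * w) * hσ
  calc ∑ i, c i * x i + γ * w
      ≤ ∑ i, (|c i| - t) + t * (Fintype.card ι - 1) + (|γ| - t) := by
        rw [hsplit]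
        gcongr with i
        · exact mul_le_of_le_one_right (sub_nonneg.2 (htc i)) (hsx i)
        · exact mul_le_of_le_one_right (sub_nonneg.2 htγ) hσw
    _ = ∑ i, |c i| + |γ| - 2 * t := by
        rw [sum_sub_distrib, sum_const, card_univ, nsmul_eq_mul]; ring

theorem exists_signVec_le (c : ι → ℝ) (γ : ℝ) {x : ι → ℝ} {w : ℝ} (hx : ∀ i, |x i| ≤ 1)
    (hw : |w| ≤ 1)
    (hfacet : ∀ I : Finset ι,
      ∑ i, signVec I i * x i - (∏ i, signVec I i) * w ≤ Fintype.card ι - 1) :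
    ∃ I : Finset ι, ∑ i, c i * x i + γ * w ≤ ∑ i, c i * signVec I i + γ * ∏ i, signVec I i := by
  set S := univ.filter fun i => 0 ≤ c i
  have hcS (i : ι) : c i * signVec S i = |c i| := by
    by_cases h : 0 ≤ c i
    · simp [S, signVec, h, abs_of_nonneg h]
    · simp [S, signVec, h, abs_of_neg (not_le.1 h)]
  have hvalS : ∑ i, c i * signVec S i = ∑ i, |c i| := sum_congr rfl fun i _ => hcS i
  have hγS : |γ * ∏ i, signVec S i| = |γ| := by rw [abs_mul, abs_prod_signVec, mul_one]
  rcases (abs_eq (abs_nonneg γ)).1 hγS with hγ | hγ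
  · refine ⟨S, ?_⟩
    rw [hvalS, hγ]
    gcongr with i
    · exact mul_le_abs_of_abs_le_one (hx i)
    · exact mul_le_abs_of_abs_le_one hw
  by_cases hγc : ∀ i, |γ| ≤ |c i|
  · refine ⟨S, ?_⟩
    have := sum_mul_add_mul_le_of_facet hx hw hcS hγ (abs_nonneg γ) le_rfl hγc (hfacet S)
    rw [hvalS, hγ]; linarith
  simp only [not_forall, not_le] at hγc
  obtain ⟨j, hj⟩ := hγc
  obtain ⟨k, -, hk⟩ := exists_min_image univ (fun i => |c i|) ⟨j, mem_univ j⟩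
  refine ⟨symmDiff S {k}, ?_⟩
  have := sum_mul_add_mul_le_of_facet hx hw hcS hγ (abs_nonneg (c k))
    ((hk j (mem_univ j)).trans hj.le) (fun i => hk i (mem_univ i)) (hfacet S)
  rw [sum_mul_signVec_symmDiff_singleton, prod_signVec_symmDiff_singleton, hvalS, hcS, mul_neg, hγ]
  linarith

lemma monomialPolytope_subset_convexHull :
    monomialPolytope ι ⊆
      convexHull ℝ (Set.range fun I : Finset ι => (signVec I, ∏ i, signVec I i)) := by
  rintro ⟨x, w⟩ ⟨hx, hw, hfacet⟩
  rw [← iInter_halfSpaces_eq (convex_convexHull ℝ _)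
    ((Set.finite_range _).isCompact_convexHull ℝ).isClosed]
  refine Set.mem_iInter.2 fun l => ?_
  obtain ⟨c, γ, hl⟩ := (l : (ι → ℝ) × ℝ →ₗ[ℝ] ℝ).exists_apply_eq_sum_mul_add_mul
  have hl' (p : (ι → ℝ) × ℝ) : l p = ∑ i, c i * p.1 i + γ * p.2 := hl p
  obtain ⟨I, hI⟩ := exists_signVec_le c γ (mem_Icc_neg_one_one_iff.1 hx) (abs_le.2 hw) hfacet
  exact ⟨_, subset_convexHull ℝ _ ⟨I, rfl⟩, by rw [hl', hl']; exact hI⟩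

theorem convexHull_graph_prod_eq_monomialPolytope :
    convexHull ℝ {p : (ι → ℝ) × ℝ | p.1 ∈ Set.Icc (-1) 1 ∧ p.2 = ∏ j, p.1 j} =
      monomialPolytope ι := by
  refine (convexHull_min graph_subset_monomialPolytope convex_monomialPolytope).antisymm
    (monomialPolytope_subset_convexHull.trans (convexHull_mono ?_))
  rintro _ ⟨I, rfl⟩
  exact ⟨mem_Icc_neg_one_one_iff.2 fun i => (abs_signVec I i).le, rfl⟩

lemma forall_facet_iff_of_even (h : Even (Fintype.card ι)) (x : ι → ℝ) (w : ℝ) :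
    (∀ I : Finset ι, ∑ i, signVec I i * x i - (∏ i, signVec I i) * w ≤ Fintype.card ι - 1) ↔
      (∀ I : Finset ι, Odd #I → ∑ i ∈ I, x i - ∑ i ∈ Iᶜ, x i + w ≤ Fintype.card ι - 1) ∧
      (∀ I : Finset ι, Even #I →
        -((Fintype.card ι : ℝ) - 1) ≤ ∑ i ∈ I, x i - ∑ i ∈ Iᶜ, x i + w) := by
  simp only [sum_signVec_mul, prod_signVec_of_even h]
  refine ⟨fun H => ⟨fun I hI => ?_, fun I hI => ?_⟩, fun ⟨Hodd, Heven⟩ I => ?_⟩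
  · have := H I
    rw [hI.neg_one_pow] at this; linarith
  · have := H Iᶜ
    rw [compl_compl, ((even_card_compl_iff h I).2 hI).neg_one_pow] at this; linarith
  · rcases Nat.even_or_odd #I with hI | hI
    · have := Heven Iᶜ ((even_card_compl_iff h I).2 hI)
      rw [compl_compl] at this; rw [hI.neg_one_pow]; linarith
    · have := Hodd I hI
      rw [hI.neg_one_pow]; linarith

end Polytope

theorem stmt8_general (n : ℕ) (heven : Even n) :
    convexHull ℝ {p : (Fin n → ℝ) × ℝ |
        p.1 ∈ Set.Icc (-1 : Fin n → ℝ) 1 ∧ p.2 = ∏ j, p.1 j}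
      = {p : (Fin n → ℝ) × ℝ | p.1 ∈ Set.Icc (-1 : Fin n → ℝ) 1 ∧
          p.2 ∈ Set.Icc (-1 : ℝ) 1 ∧
          (∀ I : Finset (Fin n), Odd I.card →
            (∑ i ∈ I, p.1 i) - (∑ i ∈ Iᶜ, p.1 i) + p.2 ≤ (n : ℝ) - 1) ∧
          (∀ I : Finset (Fin n), Even I.card →
            -((n : ℝ) - 1) ≤ (∑ i ∈ I, p.1 i) - (∑ i ∈ Iᶜ, p.1 i) + p.2)} := by
  rw [convexHull_graph_prod_eq_monomialPolytope]
  ext p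
  have hcard : Even (Fintype.card (Fin n)) := by rwa [Fintype.card_fin]
  simp only [monomialPolytope, Set.mem_ofPred_eq, forall_facet_iff_of_even hcard]
  simp only [Fintype.card_fin]

/-- Convex hull of the graph of the multilinear monomial over `[-1,1]^n`, `n` even. -/
theorem stmt8 (n : ℕ) (hn : 2 ≤ n) (heven : Even n) :
    convexHull ℝ {p : (Fin n → ℝ) × ℝ |
        p.1 ∈ Set.Icc (-1 : Fin n → ℝ) 1 ∧ p.2 = ∏ j, p.1 j}
      = {p : (Fin n → ℝ) × ℝ | p.1 ∈ Set.Icc (-1 : Fin n → ℝ) 1 ∧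
          p.2 ∈ Set.Icc (-1 : ℝ) 1 ∧
          (∀ I : Finset (Fin n), Odd I.card →
            (∑ i ∈ I, p.1 i) - (∑ i ∈ Iᶜ, p.1 i) + p.2 ≤ (n : ℝ) - 1) ∧
          (∀ I : Finset (Fin n), Even I.card →
            -((n : ℝ) - 1) ≤ (∑ i ∈ I, p.1 i) - (∑ i ∈ Iᶜ, p.1 i) + p.2)} :=
  stmt8_general n heven
end

section
/- The maximum over x ∈ [0,1]^n of min_{1≤j≤n} x_j − ∏_{j=1}^n x_j^{α_j} equals C_d = (1 − 1/d)·d^{1/(1−d)}, and this maximum is attained only at the point x = d^{1/(1−d)}·1 (1 the all-ones vector). -/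
/-!
Write `t = min_j x_j` and `c = d^{1/(1-d)}`, so that `d c^{d-1} = 1`. Since every `x_j ≥ t`,
`∏ x_j^{α_j} ≥ t^d`, hence the objective is at most `t - t^d`. By strict convexity of `t ↦ t^d`
(Bernoulli's inequality) the tangent line of `t^d` at `c`, which has slope `1`, lies strictly
below it away from `c`; so `t - t^d < c - c^d` for `t ≠ c`, and `c - c^d = (1 - 1/d) c`.
Equality forces `t = c` and `∏ x_j^{α_j} = c^d`, which, since every `α_j ≥ 1`, forces `x_j = c`.
-/

open Finset

lemma one_add_mul_sub_lt_pow {a : ℝ} (ha : 0 ≤ a) (ha1 : a ≠ 1) {n : ℕ} (hn : 2 ≤ n) :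
    1 + n * (a - 1) < a ^ n := by
  have h := one_add_mul_self_lt_rpow_one_add (s := a - 1) (by linarith) (sub_ne_zero.2 ha1)
    (p := n) (by exact_mod_cast hn)
  rwa [add_sub_cancel, Real.rpow_natCast] at h

lemma add_mul_pow_pred_mul_sub_lt_pow {c t : ℝ} {d : ℕ} (hd : 2 ≤ d) (hc : 0 < c) (ht : 0 ≤ t)
    (htc : t ≠ c) : c ^ d + d * c ^ (d - 1) * (t - c) < t ^ d := by
  have hbern := one_add_mul_sub_lt_pow (div_nonneg ht hc.le)
    (by rwa [Ne, div_eq_one_iff_eq hc.ne']) hd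
  calc c ^ d + d * c ^ (d - 1) * (t - c) = c ^ d * (1 + d * (t / c - 1)) := by
        rw [← pow_sub_one_mul (by omega : d ≠ 0)]; field_simp
    _ < c ^ d * (t / c) ^ d := mul_lt_mul_of_pos_left hbern (pow_pos hc d)
    _ = t ^ d := by rw [div_pow, mul_div_cancel₀ _ (pow_ne_zero d hc.ne')]

lemma sub_pow_lt_sub_pow_of_mul_pow_pred_eq_one {c t : ℝ} {d : ℕ} (hd : 2 ≤ d) (hc : 0 < c)
    (hkey : d * c ^ (d - 1) = 1) (ht : 0 ≤ t) (htc : t ≠ c) : t - t ^ d < c - c ^ d := by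
  have := add_mul_pow_pred_mul_sub_lt_pow hd hc ht htc
  rw [hkey] at this
  linarith

lemma sub_pow_le_sub_pow_of_mul_pow_pred_eq_one {c t : ℝ} {d : ℕ} (hd : 2 ≤ d) (hc : 0 < c)
    (hkey : d * c ^ (d - 1) = 1) (ht : 0 ≤ t) : t - t ^ d ≤ c - c ^ d := by
  rcases eq_or_ne t c with rfl | htc
  · exact le_rfl
  · exact (sub_pow_lt_sub_pow_of_mul_pow_pred_eq_one hd hc hkey ht htc).le

lemma mul_rpow_one_div_one_sub_rpow_sub_one {x : ℝ} (hx : 0 < x) (hx1 : x ≠ 1) :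
    x * (x ^ (1 / (1 - x))) ^ (x - 1) = 1 := by
  have he : 1 / (1 - x) * (x - 1) = -1 := by
    field_simp [sub_ne_zero.2 hx1.symm]; ring
  rw [← Real.rpow_mul hx.le, he, Real.rpow_neg_one, mul_inv_cancel₀ hx.ne']

lemma rpow_one_div_one_sub_lt_one {x : ℝ} (hx : 1 < x) : x ^ (1 / (1 - x)) < 1 :=
  Real.rpow_lt_one_of_one_lt_of_neg hx (div_neg_of_pos_of_neg one_pos (by linarith))

lemma natCast_mul_rpow_one_div_one_sub_pow_pred {d : ℕ} (hd : 2 ≤ d) :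
    (d : ℝ) * ((d : ℝ) ^ (1 / (1 - (d : ℝ)))) ^ (d - 1) = 1 := by
  rw [← Real.rpow_natCast, Nat.cast_sub (by omega), Nat.cast_one]
  exact mul_rpow_one_div_one_sub_rpow_sub_one (by positivity) (by norm_cast; omega)

section MinProd

variable {ι : Type*} [Fintype ι] {x : ι → ℝ} {t : ℝ} {α : ι → ℕ}

lemma pow_sum_le_prod_pow (ht : 0 ≤ t) (htx : ∀ j, t ≤ x j) :
    t ^ ∑ j, α j ≤ ∏ j, x j ^ α j := by
  rw [← prod_pow_eq_pow_sum]
  exact prod_le_prod (fun j _ => pow_nonneg ht _) fun j _ => pow_le_pow_left₀ ht (htx j) _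

lemma eq_const_of_prod_pow_eq_pow_sum (ht : 0 < t) (htx : ∀ j, t ≤ x j) (hα : ∀ j, α j ≠ 0)
    (h : ∏ j, x j ^ α j = t ^ ∑ j, α j) : x = fun _ => t := by
  funext j
  by_contra hxj
  have hlt : ∏ k, t ^ α k < ∏ k, x k ^ α k :=
    prod_lt_prod (fun k _ => pow_pos ht _) (fun k _ => pow_le_pow_left₀ ht.le (htx k) _)
      ⟨j, mem_univ j, pow_lt_pow_left₀ ((htx j).lt_of_ne' hxj) ht.le (hα j)⟩
  rw [prod_pow_eq_pow_sum, h] at hlt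
  exact hlt.false

variable [Nonempty ι] {c : ℝ} {d : ℕ}

lemma iInf_sub_prod_pow_le (hx : 0 ≤ x) (hd : d = ∑ j, α j) (hd2 : 2 ≤ d) (hc : 0 < c)
    (hkey : d * c ^ (d - 1) = 1) : (⨅ j, x j) - ∏ j, x j ^ α j ≤ c - c ^ d := by
  have ht : 0 ≤ ⨅ j, x j := le_ciInf hx
  have hprod := pow_sum_le_prod_pow (α := α) ht (ciInf_le (Set.finite_range x).bddBelow)
  rw [← hd] at hprod
  linarith [sub_pow_le_sub_pow_of_mul_pow_pred_eq_one hd2 hc hkey ht]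

lemma eq_const_of_iInf_sub_prod_pow_eq (hx : 0 ≤ x) (hα : ∀ j, α j ≠ 0) (hd : d = ∑ j, α j)
    (hd2 : 2 ≤ d) (hc : 0 < c) (hkey : d * c ^ (d - 1) = 1)
    (h : (⨅ j, x j) - ∏ j, x j ^ α j = c - c ^ d) : x = fun _ => c := by
  have ht : 0 ≤ ⨅ j, x j := le_ciInf hx
  have htx : ∀ j, (⨅ j, x j) ≤ x j := ciInf_le (Set.finite_range x).bddBelow
  have hprod := pow_sum_le_prod_pow (α := α) ht htx
  rw [← hd] at hprod
  have htc : (⨅ j, x j) = c := by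
    by_contra htc
    linarith [sub_pow_lt_sub_pow_of_mul_pow_pred_eq_one hd2 hc hkey ht htc]
  rw [htc] at htx hprod h
  exact eq_const_of_prod_pow_eq_pow_sum hc htx hα (by rw [← hd]; linarith)

end MinProd

theorem stmt10_general (n : ℕ) (α : Fin n → ℕ) (hα : ∀ j, 1 ≤ α j)
    (d : ℕ) (hd : d = ∑ j, α j) (hd2 : 2 ≤ d) :
    IsGreatest ((fun x : Fin n → ℝ => (⨅ j, x j) - ∏ j, x j ^ α j) ''
        Set.Icc (0 : Fin n → ℝ) 1)
      ((1 - 1 / (d : ℝ)) * (d : ℝ) ^ ((1 : ℝ) / (1 - (d : ℝ)))) ∧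
    ∀ x ∈ Set.Icc (0 : Fin n → ℝ) 1,
      (⨅ j, x j) - ∏ j, x j ^ α j
          = (1 - 1 / (d : ℝ)) * (d : ℝ) ^ ((1 : ℝ) / (1 - (d : ℝ))) →
        x = fun _ => (d : ℝ) ^ ((1 : ℝ) / (1 - (d : ℝ))) := by
  have : Nonempty (Fin n) := by
    rcases n with _ | n
    · rw [Fin.sum_univ_zero] at hd; omega
    · exact ⟨0⟩
  have hα0 : ∀ j, α j ≠ 0 := fun j => Nat.one_le_iff_ne_zero.mp (hα j)
  set c : ℝ := (d : ℝ) ^ ((1 : ℝ) / (1 - (d : ℝ)))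
  have hc0 : 0 < c := by positivity
  have hkey : d * c ^ (d - 1) = 1 := natCast_mul_rpow_one_div_one_sub_pow_pred hd2
  have hvalue : (1 - 1 / (d : ℝ)) * c = c - c ^ d := by
    rw [← pow_sub_one_mul (by omega : d ≠ 0), eq_one_div_of_mul_eq_one_right hkey]
    ring
  rw [hvalue]
  refine ⟨⟨⟨fun _ => c, ⟨fun _ => hc0.le, fun _ => ?_⟩, ?_⟩, ?_⟩, ?_⟩
  · exact (rpow_one_div_one_sub_lt_one (by exact_mod_cast hd2)).le
  · simp only [ciInf_const, prod_pow_eq_pow_sum, ← hd]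
  · rintro _ ⟨x, hx, rfl⟩
    exact iInf_sub_prod_pow_le hx.1 hd hd2 hc0 hkey
  · exact fun x hx h => eq_const_of_iInf_sub_prod_pow_eq hx.1 hα0 hd hd2 hc0 hkey h

/-- The error of the overestimator `min_j x_j` over `[0,1]^n` equals `C_d`,
attained only at `d^{1/(1-d)}·1`. -/
theorem stmt10 (n : ℕ) (hn : 1 ≤ n) (α : Fin n → ℕ) (hα : ∀ j, 1 ≤ α j)
    (d : ℕ) (hd : d = ∑ j, α j) (hd2 : 2 ≤ d) :
    IsGreatest ((fun x : Fin n → ℝ => (⨅ j, x j) - ∏ j, x j ^ α j) ''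
        Set.Icc (0 : Fin n → ℝ) 1)
      ((1 - 1 / (d : ℝ)) * (d : ℝ) ^ ((1 : ℝ) / (1 - (d : ℝ)))) ∧
    ∀ x ∈ Set.Icc (0 : Fin n → ℝ) 1,
      (⨅ j, x j) - ∏ j, x j ^ α j
          = (1 - 1 / (d : ℝ)) * (d : ℝ) ^ ((1 : ℝ) / (1 - (d : ℝ))) →
        x = fun _ => (d : ℝ) ^ ((1 : ℝ) / (1 - (d : ℝ))) :=
  stmt10_general n α hα d hd hd2
end

section
/- The maximum over x ∈ [0,1]^n of ∏_{j=1}^n x_j^{α_j} − max{ 0, 1 + Σ_{j=1}^n α_j (x_j − 1) } equals (1 − 1/d)^d, attained at x = (1 − 1/d)·1 (1 the all-ones vector). In particular, for the multilinear monomial (α = 1), the error of its convex envelope max{0, 1 + Σ_j (x_j − 1)} over [0,1]^n equals (1 − 1/n)^n. -/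
/-!
By weighted AM-GM, `∏ x_j ^ α_j ≤ s ^ d` where `s = (∑ α_j x_j) / d` is the weighted mean of the
coordinates, while the underestimator `max 0 (1 + d (s - 1))` depends on `s` alone; so it suffices to
bound `s ^ d - max 0 (1 + d (s - 1))` for `s ∈ [0,1]`. Below `s = 1 - 1/d` the linear part vanishes
and `s ^ d` is increasing; above it `s ^ d` grows with slope at most `d`, exactly the slope of the
linear part. Equality holds at the constant point `1 - 1/d`.
-/

open Finset

theorem one_sub_one_div_natCast_nonneg {d : ℕ} (hd : 0 < d) : 0 ≤ 1 - 1 / (d : ℝ) := by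
  rw [sub_nonneg, div_le_one (by positivity)]
  exact_mod_cast hd

theorem pow_sub_pow_le_natCast_mul_sub {a b : ℝ} (hb : 0 ≤ b) (hba : b ≤ a) (ha : a ≤ 1)
    (d : ℕ) : a ^ d - b ^ d ≤ d * (a - b) := by
  have hmax : max |a| |b| ^ (d - 1) ≤ 1 :=
    pow_le_one₀ (by positivity)
      (max_le (abs_le.2 ⟨by linarith, ha⟩) (abs_le.2 ⟨by linarith, by linarith⟩))
  calc a ^ d - b ^ d ≤ |a ^ d - b ^ d| := le_abs_self _
    _ ≤ |a - b| * d * max |a| |b| ^ (d - 1) := abs_pow_sub_pow_le a b d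
    _ ≤ (a - b) * d * 1 := by
      rw [abs_of_nonneg (sub_nonneg.2 hba)]
      gcongr
    _ = d * (a - b) := by ring

theorem Real.prod_pow_le_mean_pow {ι : Type*} (s : Finset ι) (w : ι → ℕ) {z : ι → ℝ}
    (hz : ∀ i ∈ s, 0 ≤ z i) :
    ∏ i ∈ s, z i ^ w i ≤ ((∑ i ∈ s, w i * z i) / ∑ i ∈ s, w i) ^ ∑ i ∈ s, w i := by
  rcases Nat.eq_zero_or_pos (∑ i ∈ s, w i) with hW | hW
  · rw [hW, pow_zero, prod_eq_one fun i hi => by rw [sum_eq_zero_iff.1 hW i hi, pow_zero]]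
  have hprod : 0 ≤ ∏ i ∈ s, z i ^ (w i : ℝ) := prod_nonneg fun i hi => by
    have := hz i hi; positivity
  have hamgm := Real.geom_mean_le_arith_mean s (fun i => (w i : ℝ)) z
    (fun i _ => Nat.cast_nonneg _) (by exact_mod_cast hW) hz
  rw [← Nat.cast_sum] at hamgm
  calc ∏ i ∈ s, z i ^ w i
      = ((∏ i ∈ s, z i ^ (w i : ℝ)) ^ ((∑ i ∈ s, w i : ℕ) : ℝ)⁻¹) ^ ∑ i ∈ s, w i := by
        rw [← Real.rpow_natCast, ← Real.rpow_mul hprod, inv_mul_cancel₀ (by positivity),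
          Real.rpow_one]
        exact prod_congr rfl fun i _ => (Real.rpow_natCast _ _).symm
    _ ≤ _ := by gcongr

theorem pow_sub_max_le {d : ℕ} (hd : 0 < d) {s : ℝ} (hs0 : 0 ≤ s) (hs1 : s ≤ 1) :
    s ^ d - max 0 (1 + d * (s - 1)) ≤ (1 - 1 / d) ^ d := by
  have hdpos : (0 : ℝ) < d := by exact_mod_cast hd
  rcases le_total s (1 - 1 / d) with hs | hs
  · have : 1 + d * (s - 1) ≤ 0 := by
      have := mul_le_mul_of_nonneg_left hs hdpos.le
      field_simp at this ⊢; linarith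
    rw [max_eq_left this]
    linarith [pow_le_pow_left₀ hs0 hs d]
  · have hlin : 1 + d * (s - 1) = d * (s - (1 - 1 / d)) := by field_simp; ring
    rw [hlin, max_eq_right (by nlinarith)]
    linarith [pow_sub_pow_le_natCast_mul_sub (one_sub_one_div_natCast_nonneg hd) hs hs1 d]

section EnvelopeGap

variable {ι : Type*} [Fintype ι]

def envelopeGap (α : ι → ℕ) (x : ι → ℝ) : ℝ :=
  ∏ j, x j ^ α j - max 0 (1 + ∑ j, (α j : ℝ) * (x j - 1))

variable {α : ι → ℕ} {d : ℕ}

theorem envelopeGap_le (hd : d = ∑ j, α j) (hd0 : 0 < d) {x : ι → ℝ}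
    (hx : x ∈ Set.Icc 0 1) : envelopeGap α x ≤ (1 - 1 / d) ^ d := by
  have hdpos : (0 : ℝ) < d := by exact_mod_cast hd0
  have hdsum : (d : ℝ) = ∑ j, (α j : ℝ) := by rw [hd, Nat.cast_sum]
  set s := (∑ j, (α j : ℝ) * x j) / d
  have hs0 : 0 ≤ s := div_nonneg (sum_nonneg fun j _ => mul_nonneg (Nat.cast_nonneg _) (hx.1 j))
    hdpos.le
  have hs1 : s ≤ 1 := by
    rw [div_le_one hdpos, hdsum]
    exact sum_le_sum fun j _ => mul_le_of_le_one_right (Nat.cast_nonneg _) (hx.2 j)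
  have hlin : ∑ j, (α j : ℝ) * (x j - 1) = d * (s - 1) := by
    simp only [s, mul_sub, mul_one, sum_sub_distrib, mul_div_cancel₀ _ hdpos.ne', ← hdsum]
  have hamgm : ∏ j, x j ^ α j ≤ s ^ d := by
    have := Real.prod_pow_le_mean_pow univ α fun j _ => hx.1 j
    rwa [← hd] at this
  unfold envelopeGap
  rw [hlin]
  linarith [pow_sub_max_le hd0 hs0 hs1]

theorem envelopeGap_const (hd : d = ∑ j, α j) (hd0 : 0 < d) :
    envelopeGap α (fun _ => 1 - 1 / d) = (1 - 1 / d) ^ d := by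
  have hdpos : (d : ℝ) ≠ 0 := by positivity
  have hlin : ∑ j, (α j : ℝ) * ((1 - 1 / d) - 1) = -1 := by
    rw [← sum_mul, ← Nat.cast_sum, ← hd]; field_simp; ring
  rw [envelopeGap, hlin, prod_pow_eq_pow_sum, ← hd]
  norm_num

theorem isGreatest_envelopeGap (hd : d = ∑ j, α j) (hd0 : 0 < d) :
    IsGreatest (envelopeGap α '' Set.Icc 0 1) ((1 - 1 / d) ^ d) := by
  refine ⟨⟨fun _ => 1 - 1 / d, ⟨fun _ => ?_, fun _ => ?_⟩, envelopeGap_const hd hd0⟩, ?_⟩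
  · exact one_sub_one_div_natCast_nonneg hd0
  · exact sub_le_self _ (by positivity)
  · rintro _ ⟨x, hx, rfl⟩
    exact envelopeGap_le hd hd0 hx

end EnvelopeGap

theorem stmt16_general (n : ℕ) (hn : 1 ≤ n) (α : Fin n → ℕ)
    (d : ℕ) (hd : d = ∑ j, α j) (hd2 : 2 ≤ d) :
    IsGreatest ((fun x : Fin n → ℝ =>
        (∏ j, x j ^ α j) - max 0 (1 + ∑ j, (α j : ℝ) * (x j - 1))) ''
        Set.Icc (0 : Fin n → ℝ) 1) ((1 - 1 / (d : ℝ)) ^ d) ∧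
    ((∏ j, ((1 : ℝ) - 1 / (d : ℝ)) ^ α j) -
        max 0 (1 + ∑ j, (α j : ℝ) * ((1 - 1 / (d : ℝ)) - 1)) = (1 - 1 / (d : ℝ)) ^ d) ∧
    ((∀ j, α j = 1) →
      IsGreatest ((fun x : Fin n → ℝ =>
          (∏ j, x j) - max 0 (1 + ∑ j, (x j - 1))) '' Set.Icc (0 : Fin n → ℝ) 1)
        ((1 - 1 / (n : ℝ)) ^ n)) := by
  have hd0 : 0 < d := by omega
  refine ⟨isGreatest_envelopeGap hd hd0, envelopeGap_const hd hd0, fun _ => ?_⟩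
  have hgap : envelopeGap (fun _ : Fin n => 1) =
      fun x => ∏ j, x j - max 0 (1 + ∑ j, (x j - 1)) := by
    funext x; simp [envelopeGap]
  rw [← hgap]
  exact isGreatest_envelopeGap (by simp) hn

/-- The error of the underestimator `max{0, 1 + Σ α_j(x_j−1)}` over `[0,1]^n` equals
`(1−1/d)^d`, attained at `(1−1/d)·1`; in particular for the multilinear monomial the convex
envelope error equals `(1−1/n)^n`. -/
theorem stmt16 (n : ℕ) (hn : 1 ≤ n) (α : Fin n → ℕ) (hα : ∀ j, 1 ≤ α j)
    (d : ℕ) (hd : d = ∑ j, α j) (hd2 : 2 ≤ d) :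
    IsGreatest ((fun x : Fin n → ℝ =>
        (∏ j, x j ^ α j) - max 0 (1 + ∑ j, (α j : ℝ) * (x j - 1))) ''
        Set.Icc (0 : Fin n → ℝ) 1) ((1 - 1 / (d : ℝ)) ^ d) ∧
    ((∏ j, ((1 : ℝ) - 1 / (d : ℝ)) ^ α j) -
        max 0 (1 + ∑ j, (α j : ℝ) * ((1 - 1 / (d : ℝ)) - 1)) = (1 - 1 / (d : ℝ)) ^ d) ∧
    ((∀ j, α j = 1) →
      IsGreatest ((fun x : Fin n → ℝ =>
          (∏ j, x j) - max 0 (1 + ∑ j, (x j - 1))) '' Set.Icc (0 : Fin n → ℝ) 1)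
        ((1 - 1 / (n : ℝ)) ^ n)) :=
  stmt16_general n hn α d hd hd2
end
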